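/- Let g ≥ 2 and write g = g_0^{2^u} with g_0 a nonsquare integer. Let n be a positive integer such that: (i) s_g(n) = p + h for a prime p and an integer h with 4g ≤ h ≤ 8g; (ii) g_0 is a primitive root modulo p; (iii) s_g(n) > max{(g-1)/3 · ℓ_g(n), 140g³}. Then n is the sum of at most 8g + 1 base-g Niven numbers. -/

import Mathlib

/-!
Let `D` be the multiset of digit positions of `n`, the position `i` taken with multiplicity the
`i`-th digit, so that `n = ∑_{i ∈ D} g^i` and `|D| = s_g(n) = p + h`. The order of `g` modulo `p`
is `(p - 1) / gcd(p - 1, 2^u)`, so more than a quarter of `ℓ_g(n)`, and hence each residue class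
mod `p` contains at most four positions and at most `4(g - 1) ≤ h` elements of `D`. By a
Cauchy–Davenport argument some `T ≤ D` with `|T| = h` has `∑_{i ∈ T} g^i ≡ n (mod p)`. Removing
`T` from `D` needs no borrowing, so `m = n - ∑_{i ∈ T} g^i` has digit sum `p` and is divisible
by `p`, while every `g^i` has digit sum `1`: `n = m + ∑_{i ∈ T} g^i` is a sum of `h + 1` Niven
numbers.
-/

/-- `m` is a base-`g` Niven number. -/
def IsNiven (g m : ℕ) : Prop := 0 < m ∧ (Nat.digits g m).sum ∣ m

/-- `n` is the sum of at most `k` base-`g` Niven numbers. -/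
def IsSumOfAtMostNiven (g n k : ℕ) : Prop :=
  ∃ L : List ℕ, L.length ≤ k ∧ (∀ m ∈ L, IsNiven g m) ∧ L.sum = n

open Finset
open scoped Pointwise

namespace Multiset

variable {α β : Type*}

theorem exists_le_card_eq {s : Multiset α} {n : ℕ} (hn : n ≤ card s) :
    ∃ t ≤ s, card t = n := by
  obtain ⟨t, ht⟩ := card_pos_iff_exists_mem.mp <|
    (card_powersetCard n s).symm ▸ Nat.choose_pos hn
  exact ⟨t, (mem_powersetCard.mp ht).1, (mem_powersetCard.mp ht).2⟩

theorem exists_le_map_eq_of_le_map [DecidableEq β] {f : α → β} {s : Multiset α}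
    {t : Multiset β} (h : t ≤ s.map f) : ∃ u ≤ s, u.map f = t := by
  induction s using Multiset.induction_on generalizing t with
  | empty => exact ⟨0, le_rfl, by simpa [eq_comm] using h⟩
  | cons a s ih =>
    rw [map_cons] at h
    by_cases ha : f a ∈ t
    · obtain ⟨u, hu, hut⟩ := ih (erase_le_iff_le_cons.mpr h)
      exact ⟨a ::ₘ u, cons_le_cons a hu, by rw [map_cons, hut, cons_erase ha]⟩
    · obtain ⟨u, hu, rfl⟩ := ih ((le_cons_of_notMem ha).mp h)
      exact ⟨u, hu.trans (le_cons_self s a), rfl⟩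

theorem count_add_card_filter_ne [DecidableEq α] (s : Multiset α) (a : α) :
    s.count a + card (s.filter (· ≠ a)) = card s := by
  rw [card_eq_countP_add_countP (· = a) s, countP_eq_card_filter, countP_eq_card_filter,
    count_eq_card_filter_eq]
  simp only [eq_comm, ne_eq]

end Multiset

section OrderOf

variable {M : Type*} [Monoid M]

theorem IsOfFinOrder.card_filter_pow_eq_le [DecidableEq M] {a : M} (ha : IsOfFinOrder a)
    (b : M) (ℓ : ℕ) : #{i ∈ range ℓ | a ^ i = b} ≤ ℓ / orderOf a + 1 := by
  rw [← Finset.card_range (ℓ / orderOf a + 1)]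
  refine card_le_card_of_injOn (· / orderOf a) (fun i hi => ?_) (fun i hi j hj hij => ?_)
  · simp only [coe_filter, mem_range, Set.mem_ofPred_eq, coe_range, Set.mem_Iio] at hi ⊢
    exact Nat.lt_succ_of_le (Nat.div_le_div_right hi.1.le)
  · simp only [coe_filter, mem_range, Set.mem_ofPred_eq] at hi hj
    have hmod : i % orderOf a = j % orderOf a :=
      ha.pow_eq_pow_iff_modEq.mp (hi.2.trans hj.2.symm)
    rw [← Nat.div_add_mod i (orderOf a), ← Nat.div_add_mod j (orderOf a)]
    simp only at hij
    rw [hij, hmod]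

theorem exists_le_orderOf_pow_mul_eq (a : M) {k : ℕ} (hk : k ≠ 0) :
    ∃ e ≤ k, orderOf (a ^ k) * e = orderOf a := by
  refine ⟨(orderOf a).gcd k, Nat.gcd_le_right _ (Nat.pos_of_ne_zero hk), ?_⟩
  rw [orderOf_pow' a hk]
  exact Nat.div_mul_cancel (Nat.gcd_dvd_left _ _)

end OrderOf

namespace ZMod

variable {p : ℕ}

theorem min_le_card_finsetSum (hp : p.Prime) {ι : Type*} (s : Finset ι)
    (B : ι → Finset (ZMod p)) (hB : ∀ i ∈ s, (B i).Nonempty) :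
    min p (∑ i ∈ s, #(B i) + 1 - #s) ≤ #(∑ i ∈ s, B i) := by
  classical
  induction s using Finset.cons_induction with
  | empty => simp
  | cons a s has ih =>
    have hBa := hB a (mem_cons_self a s)
    have ih := ih fun i hi => hB i (Finset.mem_cons_of_mem hi)
    have hs : #s ≤ ∑ i ∈ s, #(B i) := by
      simpa using Finset.card_nsmul_le_sum s (fun i => #(B i)) 1
        fun i hi => (hB i (Finset.mem_cons_of_mem hi)).card_pos
    have hsum : (∑ i ∈ s, B i).Nonempty := by
      rw [← Finset.card_pos]; have := hp.two_le; omega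
    have hCD := ZMod.cauchy_davenport hp hBa hsum
    have := hBa.card_pos
    rw [sum_cons, sum_cons, card_cons]
    omega

/- Put aside `h - K` elements outside a most frequent residue `ρ₀`, of multiplicity `K`. The
rest `S'` is the union of the `K` layers `{ρ | k < count ρ S'}`, all containing `ρ₀` and of total
size at least `p + K - 1`, so by Cauchy–Davenport every residue is a sum of one element from
each layer. -/
theorem exists_le_card_eq_sum_eq [Fact p.Prime] {S : Multiset (ZMod p)} {h : ℕ}
    (hS : p + h ≤ Multiset.card S + 1) (hcount : ∀ ρ, S.count ρ ≤ h) (t : ZMod p) :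
    ∃ T ≤ S, Multiset.card T = h ∧ T.sum = t := by
  classical
  obtain ⟨ρ₀, -, hρ₀⟩ := exists_max_image univ (S.count ·) univ_nonempty
  set K := S.count ρ₀
  have hK : K ≤ h := hcount ρ₀
  have hS₀ := S.count_add_card_filter_ne ρ₀
  obtain ⟨T₀, hT₀, hT₀card⟩ := Multiset.exists_le_card_eq (s := S.filter (· ≠ ρ₀)) (n := h - K)
    (by have := (Fact.out : p.Prime).two_le; omega)
  have hT₀S : T₀ ≤ S := hT₀.trans (Multiset.filter_le _ _)
  set S' := S - T₀
  have hS'card : p + K ≤ Multiset.card S' + 1 := by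
    rw [Multiset.card_sub hT₀S]; omega
  have hS'count (ρ : ZMod p) : S'.count ρ ≤ K :=
    (Multiset.count_le_of_le ρ (Multiset.sub_le_self S T₀)).trans (hρ₀ ρ (mem_univ ρ))
  have hS'ρ₀ : S'.count ρ₀ = K := by
    rw [Multiset.count_sub, (Multiset.count_eq_zero (s := T₀)).mpr fun h => ?_, Nat.sub_zero]
    exact (Multiset.of_mem_filter (Multiset.mem_of_le hT₀ h)) rfl
  set B : ℕ → Finset (ZMod p) := fun k => {ρ | k < S'.count ρ}
  have hB : ∀ k ∈ range K, (B k).Nonempty := fun k hk =>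
    ⟨ρ₀, by simpa [B, hS'ρ₀] using hk⟩
  have hBcard : ∑ k ∈ range K, #(B k) = Multiset.card S' := by
    calc ∑ k ∈ range K, #(B k) = ∑ ρ, #{k ∈ range K | k < S'.count ρ} := by
          simp only [B, card_filter]; exact sum_comm
      _ = ∑ ρ, S'.count ρ := by
          refine sum_congr rfl fun ρ _ => ?_
          rw [show {k ∈ range K | k < S'.count ρ} = range (S'.count ρ) by
            ext k; simp only [mem_filter, mem_range]; have := hS'count ρ; omega, card_range]
      _ = Multiset.card S' := Multiset.sum_count_eq_card (by simp)
  have huniv : ∑ k ∈ range K, B k = univ := by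
    refine eq_univ_of_card _ (le_antisymm (card_le_univ _) ?_)
    have := min_le_card_finsetSum Fact.out (range K) B hB
    rw [hBcard, card_range] at this
    rw [ZMod.card]
    omega
  obtain ⟨f, hf, hfsum⟩ := (Set.mem_finsetSum (range K) (fun k => (B k : Set (ZMod p)))
    (t - T₀.sum)).mp (by rw [← coe_sum, huniv]; simp)
  set T₁ := (range K).val.map f
  have hT₁ : T₁ ≤ S' := by
    refine Multiset.le_iff_count.mpr fun ρ => ?_
    calc T₁.count ρ = #{k ∈ range K | ρ = f k} := by rw [Multiset.count_map]; rfl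
      _ ≤ #(range (S'.count ρ)) := card_le_card fun k hk => by
          rw [mem_filter] at hk
          simpa [B, hk.2] using hf hk.1
      _ = S'.count ρ := card_range _
  refine ⟨T₀ + T₁, ?_, ?_, ?_⟩
  · calc T₀ + T₁ ≤ T₀ + S' := by gcongr
      _ = S := add_tsub_cancel_of_le hT₀S
  · simp [T₁, hT₀card, hK]
  · rw [Multiset.sum_add, show T₁.sum = t - T₀.sum from hfsum, add_sub_cancel]

end ZMod

def digitMultiset : List ℕ → Multiset ℕ
  | [] => 0
  | a :: L => Multiset.replicate a 0 + (digitMultiset L).map Nat.succ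

theorem count_digitMultiset (L : List ℕ) (i : ℕ) : (digitMultiset L).count i = L.getD i 0 := by
  induction L generalizing i with
  | nil => simp [digitMultiset]
  | cons a L ih =>
    cases i with
    | zero => simp [digitMultiset]
    | succ i =>
      simp [digitMultiset, Multiset.count_replicate, ih, List.getD_eq_getElem?_getD,
        Multiset.count_map_eq_count' _ _ Nat.succ_injective]

theorem card_digitMultiset (L : List ℕ) : Multiset.card (digitMultiset L) = L.sum := by
  induction L with
  | nil => rfl
  | cons a L ih => simp [digitMultiset, ih]

theorem sum_map_pow_digitMultiset (b : ℕ) (L : List ℕ) :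
    ((digitMultiset L).map (b ^ ·)).sum = Nat.ofDigits b L := by
  induction L with
  | nil => rfl
  | cons a L ih =>
    simp [digitMultiset, Nat.ofDigits_cons, ← ih, pow_succ', Multiset.sum_map_mul_left]

theorem lt_length_of_mem_digitMultiset {L : List ℕ} {i : ℕ} (hi : i ∈ digitMultiset L) :
    i < L.length := by
  by_contra! h
  rw [← Multiset.count_pos, count_digitMultiset, List.getD_eq_default _ _ h] at hi
  exact hi.ne rfl

theorem Nat.sum_digits_sum_map_pow {g : ℕ} (hg : 1 < g) {E : Multiset ℕ}
    (hE : ∀ i, E.count i < g) : (Nat.digits g (E.map (g ^ ·)).sum).sum = Multiset.card E := by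
  set L := (List.range (E.sup + 1)).map E.count
  have hEL : E = digitMultiset L := by
    ext i
    rw [count_digitMultiset]
    rcases lt_or_ge i (E.sup + 1) with hi | hi
    · simp [L, hi]
    · rw [List.getD_eq_default _ _ (by simpa [L] using hi), Multiset.count_eq_zero]
      exact fun hiE => (Multiset.le_sup hiE).not_gt hi
  rw [hEL, sum_map_pow_digitMultiset, card_digitMultiset]
  refine Nat.sum_digits_ofDigits_eq_sum hg (l := L.length) ⟨rfl, fun a ha => ?_⟩
  obtain ⟨i, -, rfl⟩ := List.mem_map.mp ha
  exact hE i

theorem count_digitMultiset_digits_lt {g : ℕ} (hg : 1 < g) (n i : ℕ) :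
    (digitMultiset (Nat.digits g n)).count i < g := by
  rw [count_digitMultiset, List.getD_eq_getElem?_getD]
  cases h : (Nat.digits g n)[i]? with
  | none => simpa using hg.pos
  | some a => exact Nat.digits_lt_base hg (List.mem_of_getElem? h)

theorem count_map_digitMultiset_le {β : Type*} [DecidableEq β] {g : ℕ} (hg : 1 < g) (n : ℕ)
    (f : ℕ → β) (b : β) :
    ((digitMultiset (Nat.digits g n)).map f).count b ≤
      #{i ∈ range (Nat.digits g n).length | f i = b} * (g - 1) := by
  set D := digitMultiset (Nat.digits g n)
  rw [Multiset.count_map, ← Multiset.sum_count_eq_card (s := {i ∈ range _ | f i = b})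
    fun i hi => ?_]
  · refine sum_le_card_nsmul _ _ _ fun i _ => ?_
    have : D.count i < g := count_digitMultiset_digits_lt hg n i
    have := Multiset.count_le_of_le i (Multiset.filter_le (b = f ·) D)
    omega
  · obtain ⟨hiD, rfl⟩ := Multiset.mem_filter.mp hi
    simpa using lt_length_of_mem_digitMultiset hiD

theorem count_map_pow_digitMultiset_le {M : Type*} [Monoid M] [DecidableEq M] {g n k : ℕ}
    (hg : 1 < g) {a : M} (hk : (Nat.digits g n).length < orderOf a * k) (b : M) :
    ((digitMultiset (Nat.digits g n)).map (a ^ ·)).count b ≤ k * (g - 1) := by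
  have ha : IsOfFinOrder a := orderOf_pos_iff.mp <| Nat.pos_of_ne_zero fun h0 => by
    simp [h0] at hk
  refine (count_map_digitMultiset_le hg n _ b).trans (Nat.mul_le_mul_right _ ?_)
  exact (ha.card_filter_pow_eq_le b _).trans (Nat.div_lt_of_lt_mul hk)

theorem isNiven_pow {g : ℕ} (hg : 1 < g) (i : ℕ) : IsNiven g (g ^ i) := by
  refine ⟨pow_pos (zero_lt_one.trans hg) i, ?_⟩
  have := Nat.sum_digits_sum_map_pow hg (E := {i}) fun j => by
    rw [Multiset.count_singleton]; split_ifs <;> omega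
  simp_all

theorem isSumOfAtMostNiven_of_le_digitMultiset {g n p k : ℕ} (hg : 1 < g) (hp : 0 < p)
    {T : Multiset ℕ} (hT : T ≤ digitMultiset (Nat.digits g n))
    (hsum : (Nat.digits g n).sum = p + Multiset.card T)
    (hmod : (((T.map (g ^ ·)).sum : ℕ) : ZMod p) = n) (hk : Multiset.card T + 1 ≤ k) :
    IsSumOfAtMostNiven g n k := by
  set D := digitMultiset (Nat.digits g n)
  set m := ((D - T).map (g ^ ·)).sum
  have hm : (Nat.digits g m).sum = p := by
    rw [Nat.sum_digits_sum_map_pow hg fun i => (Multiset.count_le_of_le i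
      (Multiset.sub_le_self D T)).trans_lt (count_digitMultiset_digits_lt hg n i),
      Multiset.card_sub hT, card_digitMultiset, hsum]
    omega
  have hn : m + (T.map (g ^ ·)).sum = n := by
    rw [← Multiset.sum_add, ← Multiset.map_add, tsub_add_cancel_of_le hT,
      sum_map_pow_digitMultiset, Nat.ofDigits_digits]
  have hpm : p ∣ m := by
    have := congrArg (Nat.cast : ℕ → ZMod p) hn
    rwa [Nat.cast_add, hmod, add_eq_right, ZMod.natCast_eq_zero_iff] at this
  have hmpos : 0 < m := Nat.pos_of_ne_zero fun h0 => by simp [h0] at hm; omega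
  refine ⟨m :: (T.map (g ^ ·)).toList, by simpa using hk, fun x hx => ?_, ?_⟩
  · rcases List.mem_cons.mp hx with rfl | hx
    · exact ⟨hmpos, hm ▸ hpm⟩
    · obtain ⟨i, -, rfl⟩ := Multiset.mem_map.mp (Multiset.mem_toList.mp hx)
      exact isNiven_pow hg i
  · rw [List.sum_cons, Multiset.sum_toList, hn]

theorem length_lt_orderOf_natCast_mul_four {g g₀ u p ℓ h : ℕ} (hg₀ : 2 ≤ g₀)
    (hgu : g = g₀ ^ 2 ^ u) (hroot : orderOf (g₀ : ZMod p) = p - 1)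
    (hlen : (g - 1) * ℓ < 3 * (p + h)) (hph : 3 * h + 4 ≤ p) :
    ℓ < orderOf (g : ZMod p) * 4 := by
  obtain ⟨e, he, hde⟩ := exists_le_orderOf_pow_mul_eq (g₀ : ZMod p) (k := 2 ^ u) (by positivity)
  rw [← Nat.cast_pow, ← hgu, hroot] at hde
  have heg : e ≤ g - 1 := by
    have : 2 ^ u < 2 ^ 2 ^ u := Nat.lt_two_pow_self
    have : 2 ^ 2 ^ u ≤ g := hgu ▸ Nat.pow_le_pow_left hg₀ _
    omega
  refine Nat.lt_of_mul_lt_mul_right (a := e) ?_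
  calc ℓ * e ≤ (g - 1) * ℓ := by rw [mul_comm]; exact Nat.mul_le_mul_right _ heg
    _ < 4 * (p - 1) := by omega
    _ = _ := by rw [← hde]; ring

theorem niven_root_lemma_general (g g₀ u : ℕ) (hg : 2 ≤ g) (hg₀ : 2 ≤ g₀)
    (hgu : g = g₀ ^ 2 ^ u)
    (n : ℕ) (p h : ℕ) (hp : p.Prime)
    (hh : 4 * g ≤ h ∧ h ≤ 8 * g)
    (hsum : (Nat.digits g n).sum = p + h)
    (hroot : orderOf ((g₀ : ZMod p)) = p - 1)
    (hbig : (((Nat.digits g n).sum : ℚ)) >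
      max (((g : ℚ) - 1) / 3 * (Nat.digits g n).length) (140 * (g : ℚ) ^ 3)) :
    IsSumOfAtMostNiven g n (8 * g + 1) := by
  have := Fact.mk hp
  set ℓ := (Nat.digits g n).length
  rw [hsum, Nat.cast_add, gt_iff_lt, max_lt_iff] at hbig
  have hlen : (g - 1) * ℓ < 3 * (p + h) := by
    have : ((g - 1 : ℕ) : ℚ) * ℓ < 3 * (p + h) := by
      push_cast [Nat.cast_sub (by omega : 1 ≤ g)]; linarith
    exact_mod_cast this
  have hph : 3 * h + 4 ≤ p := by
    have : 140 * g ^ 3 < p + h := by exact_mod_cast hbig.2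
    have : 4 * g ≤ g ^ 3 := by rw [pow_succ]; exact Nat.mul_le_mul_right g (by nlinarith)
    omega
  have hℓ := length_lt_orderOf_natCast_mul_four hg₀ hgu hroot hlen hph
  have hcount (ρ : ZMod p) :
      ((digitMultiset (Nat.digits g n)).map ((g : ZMod p) ^ ·)).count ρ ≤ h :=
    (count_map_pow_digitMultiset_le hg hℓ ρ).trans (by omega)
  obtain ⟨T, hTD, hTcard, hTsum⟩ := ZMod.exists_le_card_eq_sum_eq
    (by rw [Multiset.card_map, card_digitMultiset, hsum]; omega) hcount n
  obtain ⟨T, hT, rfl⟩ := Multiset.exists_le_map_eq_of_le_map hTD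
  refine isSumOfAtMostNiven_of_le_digitMultiset hg hp.pos hT
    (by rw [hsum, ← hTcard, Multiset.card_map]) ?_ (by rw [← Multiset.card_map, hTcard]; omega)
  simpa [Nat.cast_multiset_sum, Multiset.map_map] using hTsum

/-- Lemma 3: write `g = g₀^(2^u)` with `g₀ ≥ 2` not a square. If (i) `s_g(n) = p + h` for a
prime `p` and `4g ≤ h ≤ 8g`; (ii) `g₀` is a primitive root mod `p`; and
(iii) `s_g(n) > max{(g-1)/3 · ℓ_g(n), 140 g³}`, then `n` is the sum of at most `8g + 1`
base-`g` Niven numbers. -/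
theorem niven_root_lemma (g g₀ u : ℕ) (hg : 2 ≤ g) (hg₀ : 2 ≤ g₀)
    (hns : ¬ ∃ a : ℕ, a * a = g₀) (hgu : g = g₀ ^ 2 ^ u)
    (n : ℕ) (hn : 0 < n) (p h : ℕ) (hp : p.Prime)
    (hh : 4 * g ≤ h ∧ h ≤ 8 * g)
    (hsum : (Nat.digits g n).sum = p + h)
    (hroot : orderOf ((g₀ : ZMod p)) = p - 1)
    (hbig : (((Nat.digits g n).sum : ℚ)) >
      max (((g : ℚ) - 1) / 3 * (Nat.digits g n).length) (140 * (g : ℚ) ^ 3)) :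
    IsSumOfAtMostNiven g n (8 * g + 1) :=
  niven_root_lemma_general g g₀ u hg hg₀ hgu n p h hp hh hsum hroot hbig
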